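/- Let N = 2^M and suppose J ⊆ Z_N is spectral, i.e., there exists I ⊆ Z_N with |I| = |J| such that the submatrix F(I,J) of the DFT matrix (rows I, columns J) is unitary up to scaling. Then J is homogeneous: the number of distinct 2-adic valuations v₂(j_s - j_t) over distinct pairs in J equals log₂|J|. In particular |J| is a power of 2. -/

import Mathlib

open Matrix

def pivots (M : ℕ) (J : Finset (ZMod (2^M))) : Finset ℕ :=
  J.offDiag.image fun p => padicValNat 2 (p.1 - p.2).val

/-- The submatrix of the DFT matrix with rows indexed by `I` and columns indexed by `J`. -/
noncomputable def Fsub (M : ℕ) (I J : Finset (ZMod (2^M))) : Matrix I J ℂ :=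
  fun i j => Complex.exp (-2 * Real.pi * Complex.I * (i.1.val : ℂ) * (j.1.val : ℂ) / (2^M))


lemma testBit_ne {M : ℕ} {x y : ZMod (2^M)} (hxy : x ≠ y) :
    Nat.testBit x.val (padicValNat 2 (x - y).val) ≠
      Nat.testBit y.val (padicValNat 2 (x - y).val) := by
  have hM : (2:ℕ)^M ≠ 0 := by positivity
  haveI : NeZero ((2:ℕ)^M) := ⟨hM⟩
  set d := (x - y).val with hd_def
  set v := padicValNat 2 d with hv_def
  have hd0 : d ≠ 0 := by
    simp only [hd_def, ne_eq, ZMod.val_eq_zero, sub_eq_zero]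
    exact hxy
  have hdvd : 2 ^ v ∣ d := pow_padicValNat_dvd
  have hndvd : ¬ 2 ^ (v+1) ∣ d := pow_succ_padicValNat_not_dvd hd0
  have hdlt : d < 2 ^ M := ZMod.val_lt _
  have hvM : v + 1 ≤ M := by
    by_contra h
    push_neg at h
    have h1 : (2:ℕ)^M ∣ d := dvd_trans (pow_dvd_pow 2 (by omega)) hdvd
    have := Nat.le_of_dvd (Nat.pos_of_ne_zero hd0) h1
    omega
  have hcast : ((y.val + d : ℕ) : ZMod (2^M)) = ((x.val : ℕ) : ZMod (2^M)) := by
    push_cast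
    simp only [hd_def, ZMod.natCast_val, ZMod.cast_id]
    ring
  have hcong : x.val ≡ y.val + d [MOD 2^(v+1)] :=
    Nat.ModEq.of_dvd (pow_dvd_pow 2 hvM)
      ((ZMod.natCast_eq_natCast_iff _ _ _).mp hcast.symm)
  intro hbit
  apply hndvd
  -- bits equal implies congruence mod 2^(v+1)
  set a := x.val
  set b := y.val
  have hlow : a % 2^v = b % 2^v := by
    have h1 : a ≡ b + d [MOD 2^v] := Nat.ModEq.of_dvd (pow_dvd_pow 2 (by omega)) hcong
    have h2 : b + d ≡ b + 0 [MOD 2^v] :=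
      Nat.ModEq.add_left b ((Nat.modEq_zero_iff_dvd).mpr hdvd)
    exact (by simpa using h1.trans h2 : a ≡ b [MOD 2^v])
  have hbit' : a / 2^v % 2 = b / 2^v % 2 := by
    simp only [Nat.testBit_eq_decide_div_mod_eq] at hbit
    have ha2 := Nat.mod_lt (a / 2^v) (show 0 < 2 by norm_num)
    have hb2 := Nat.mod_lt (b / 2^v) (show 0 < 2 by norm_num)
    interval_cases h : (a / 2^v % 2) <;> interval_cases h' : (b / 2^v % 2) <;>
      simp_all
  have hmod : a % 2^(v+1) = b % 2^(v+1) := by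
    rw [pow_succ, Nat.mod_mul, Nat.mod_mul, hlow, hbit']
  have hbd : b + d ≡ b + 0 [MOD 2^(v+1)] := by
    have h1 : b + d ≡ a [MOD 2^(v+1)] := hcong.symm
    have h2 : a ≡ b [MOD 2^(v+1)] := hmod
    simpa using h1.trans h2
  exact (Nat.modEq_zero_iff_dvd).mp (Nat.ModEq.add_left_cancel' b hbd)

lemma card_le_pow (M : ℕ) (J : Finset (ZMod (2^M))) : J.card ≤ 2 ^ (pivots M J).card := by
  classical
  have hinj : Function.Injective
      (fun (j : ↥J) (v : ↥(pivots M J)) => Nat.testBit j.1.val v.1) := by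
    intro j j' h
    by_contra hne
    have hne' : j.1 ≠ j'.1 := fun hx => hne (Subtype.ext hx)
    have hv : padicValNat 2 (j.1 - j'.1).val ∈ pivots M J :=
      Finset.mem_image.mpr ⟨(j.1, j'.1), Finset.mem_offDiag.mpr ⟨j.2, j'.2, hne'⟩, rfl⟩
    exact testBit_ne hne' (congrFun h ⟨_, hv⟩)
  calc J.card = Fintype.card ↥J := (Fintype.card_coe J).symm
    _ ≤ Fintype.card (↥(pivots M J) → Bool) := Fintype.card_le_of_injective _ hinj
    _ = 2 ^ (pivots M J).card := by simp [Fintype.card_fun, Fintype.card_coe]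

open Complex

lemma conj_term (M : ℕ) (a b : ℕ) :
    (starRingEnd ℂ) (Complex.exp (-2 * Real.pi * Complex.I * (a : ℂ) * (b : ℂ) / (2^M)))
      = Complex.exp (2 * Real.pi * Complex.I * (a : ℂ) * (b : ℂ) / (2^M)) := by
  rw [← Complex.exp_conj]
  congr 1
  simp only [map_div₀, _root_.map_mul, map_pow, map_neg, map_ofNat, Complex.conj_I,
    Complex.conj_ofReal, map_natCast]
  ring

lemma term_eq (M a b b' d : ℕ) (k : ℤ) (hk : (b:ℤ) - b' - d = 2^M * k) :
    Complex.exp (2 * Real.pi * Complex.I * (a : ℂ) * (b : ℂ) / (2^M)) *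
      Complex.exp (-2 * Real.pi * Complex.I * (a : ℂ) * (b' : ℂ) / (2^M)) =
    (Complex.exp (2 * Real.pi * Complex.I / (2^M)) ^ d) ^ a := by
  rw [← Complex.exp_nat_mul, ← Complex.exp_nat_mul, ← Complex.exp_add]
  rw [Complex.exp_eq_exp_iff_exists_int]
  refine ⟨(a : ℤ) * k, ?_⟩
  have hkC : (b : ℂ) - (b' : ℂ) - (d : ℂ) = (2:ℂ)^M * (k : ℂ) := by
    exact_mod_cast congrArg (Int.cast : ℤ → ℂ) hk
  have h2M : ((2:ℂ)^M) ≠ 0 := pow_ne_zero M two_ne_zero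
  field_simp
  push_cast
  linear_combination (a:ℂ) * hkC

lemma orth (M : ℕ) (I J : Finset (ZMod (2^M)))
    (hne : J.Nonempty) (hcard : I.card = J.card)
    (hFF : Fsub M I J * (Fsub M I J)ᴴ = (J.card : ℂ) • 1)
    {j j' : ZMod (2^M)} (hj : j ∈ J) (hj' : j' ∈ J) (hjj : j ≠ j') :
    ∑ i ∈ I, (Complex.exp (2 * Real.pi * Complex.I / (2^M)) ^ (j - j').val) ^ (ZMod.val i)
      = 0 := by
  classical
  have hM : (2:ℕ)^M ≠ 0 := by positivity
  haveI : NeZero ((2:ℕ)^M) := ⟨hM⟩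
  set A := Fsub M I J with hA
  have hc : (J.card : ℂ) ≠ 0 := by
    exact_mod_cast Finset.card_ne_zero.mpr hne
  have h1 : A * (((J.card : ℂ))⁻¹ • Aᴴ) = 1 := by
    rw [Matrix.mul_smul, hFF, smul_smul, inv_mul_cancel₀ hc, one_smul]
  have e : ↥I ≃ ↥J :=
    Fintype.equivOfCardEq (by simp [Fintype.card_coe, hcard])
  have h2 : (((J.card : ℂ))⁻¹ • Aᴴ) * A = 1 := (Matrix.mul_eq_one_comm_of_equiv e).mp h1
  have h3 : Aᴴ * A = (J.card : ℂ) • 1 := by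
    have := congrArg (fun B => (J.card : ℂ) • B) h2
    simpa [Matrix.smul_mul, smul_smul, mul_inv_cancel₀ hc] using this
  have h4 : (Aᴴ * A) ⟨j, hj⟩ ⟨j', hj'⟩ = 0 := by
    rw [h3]
    have : (⟨j, hj⟩ : ↥J) ≠ ⟨j', hj'⟩ := fun h => hjj (congrArg Subtype.val h)
    simp [Matrix.smul_apply, Matrix.one_apply_ne this]
  rw [Matrix.mul_apply] at h4
  -- rewrite each term
  rw [← h4]
  rw [← Finset.sum_coe_sort I
    (fun i => (Complex.exp (2 * Real.pi * Complex.I / (2^M)) ^ (j - j').val) ^ (ZMod.val i))]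
  apply Finset.sum_congr rfl
  intro i _
  rw [Matrix.conjTranspose_apply, hA]
  simp only [Fsub]
  rw [Complex.star_def, conj_term]
  -- now term_eq with b = j.val, b' = j'.val, d = (j - j').val
  have hcast : (((j.val : ℤ) - (j'.val : ℤ) : ℤ) : ZMod (2^M))
      = (((j - j').val : ℤ) : ZMod (2^M)) := by
    push_cast
    simp [ZMod.natCast_val, ZMod.cast_id]
  obtain ⟨k, hk⟩ : ∃ k : ℤ, (j.val : ℤ) - (j'.val : ℤ) - (j - j').val = 2^M * k := by
    obtain ⟨k, hk⟩ := Int.ModEq.dvd ((ZMod.intCast_eq_intCast_iff _ _ _).mp hcast)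
    exact ⟨-k, by push_cast at hk ⊢; linarith⟩
  exact (term_eq M (ZMod.val i.1) j.val j'.val (j - j').val k hk).symm

lemma primroot {M d : ℕ} (hd0 : d ≠ 0) (hdlt : d < 2^M) :
    IsPrimitiveRoot (Complex.exp (2 * Real.pi * Complex.I / (2^M)) ^ d)
      (2^(M - padicValNat 2 d)) := by
  set v := padicValNat 2 d with hv
  have hdvd : 2 ^ v ∣ d := pow_padicValNat_dvd
  have hndvd : ¬ 2 ^ (v+1) ∣ d := pow_succ_padicValNat_not_dvd hd0
  have hvM : v < M := by
    by_contra h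
    push_neg at h
    have h1 : (2:ℕ)^M ∣ d := dvd_trans (pow_dvd_pow 2 h) hdvd
    have := Nat.le_of_dvd (Nat.pos_of_ne_zero hd0) h1
    omega
  have hζ : IsPrimitiveRoot (Complex.exp (2 * Real.pi * Complex.I / (2^M))) (2^M) := by
    have := Complex.isPrimitiveRoot_exp (2^M) (by positivity)
    convert this using 3
    push_cast
    ring
  have hsplit : (2:ℕ)^M = 2^v * 2^(M-v) := by
    rw [← pow_add]
    congr 1
    omega
  have h1 : IsPrimitiveRoot (Complex.exp (2 * Real.pi * Complex.I / (2^M)) ^ (2^v))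
      (2^(M-v)) := hζ.pow (by positivity) hsplit
  set u := d / 2^v with hu
  have hdu : d = 2^v * u := (Nat.mul_div_cancel' hdvd).symm
  have hu2 : ¬ 2 ∣ u := by
    intro ⟨w, hw⟩
    exact hndvd ⟨w, by rw [hdu, hw]; ring⟩
  have hcop : u.Coprime (2^(M-v)) :=
    Nat.Coprime.pow_right _ (Nat.coprime_comm.mp (Nat.Prime.coprime_iff_not_dvd Nat.prime_two |>.mpr hu2))
  have h2 := h1.pow_of_coprime u hcop
  rwa [← pow_mul, ← hdu] at h2

lemma padic_lt {M : ℕ} {x y : ZMod (2^M)} (hxy : x ≠ y) :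
    padicValNat 2 (x - y).val < M := by
  haveI : NeZero ((2:ℕ)^M) := ⟨by positivity⟩
  have hd0 : (x - y).val ≠ 0 := by
    simp only [ne_eq, ZMod.val_eq_zero, sub_eq_zero]; exact hxy
  have hdlt : (x - y).val < 2^M := ZMod.val_lt _
  by_contra h
  push_neg at h
  have h1 : (2:ℕ)^M ∣ (x - y).val := dvd_trans (pow_dvd_pow 2 h) pow_padicValNat_dvd
  have := Nat.le_of_dvd (Nat.pos_of_ne_zero hd0) h1
  omega

lemma pow_dvd_card (M : ℕ) (I J : Finset (ZMod (2^M)))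
    (hne : J.Nonempty) (hcard : I.card = J.card)
    (hFF : Fsub M I J * (Fsub M I J)ᴴ = (J.card : ℂ) • 1) :
    2 ^ (pivots M J).card ∣ J.card := by
  classical
  haveI : NeZero ((2:ℕ)^M) := ⟨by positivity⟩
  set p : Polynomial ℤ := ∑ i ∈ I, Polynomial.X ^ (ZMod.val i) with hp
  have hIne : I.Nonempty := Finset.card_pos.mp (by rw [hcard]; exact Finset.card_pos.mpr hne)
  have hcoeff : ∀ i0 ∈ I, p.coeff (ZMod.val i0) = 1 := by
    intro i0 h0
    rw [hp, Polynomial.finset_sum_coeff,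
      Finset.sum_congr rfl (fun i (hi : i ∈ I) => show (Polynomial.X ^ (ZMod.val i) : Polynomial ℤ).coeff (ZMod.val i0) = if i = i0 then 1 else 0 by
        rw [Polynomial.coeff_X_pow]
        congr 1
        simp only [eq_iff_iff]
        exact ⟨fun h => (ZMod.val_injective _ h).symm, fun h => by rw [h]⟩)]
    rw [Finset.sum_ite_eq' I i0 (fun _ => (1:ℤ))]
    simp [h0]
  obtain ⟨i0, hi0⟩ := hIne
  have hprim : p.IsPrimitive := by
    intro r hr
    rw [Polynomial.C_dvd_iff_dvd_coeff] at hr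
    have h := hr (ZMod.val i0)
    rw [hcoeff i0 hi0] at h
    exact isUnit_of_dvd_one h
  have heval : p.eval 1 = (I.card : ℤ) := by
    rw [hp]
    simp [Polynomial.eval_finset_sum]
  have haeval : ∀ x ∈ J, ∀ y ∈ J, x ≠ y →
      (Polynomial.aeval (Complex.exp (2 * Real.pi * Complex.I / (2^M)) ^ (x - y).val)) p = 0 := by
    intro x hx y hy hxy
    rw [hp, map_sum]
    simp only [map_pow, Polynomial.aeval_X]
    exact orth M I J hne hcard hFF hx hy hxy
  set S := (pivots M J).image (fun v => M - v) with hS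
  have hpivlt : ∀ v ∈ pivots M J, v < M := by
    intro v hv
    obtain ⟨q, hq, rfl⟩ := Finset.mem_image.mp hv
    exact padic_lt (Finset.mem_offDiag.mp hq).2.2
  have hcyc : ∀ n ∈ S, Polynomial.cyclotomic (2^n) ℤ ∣ p := by
    intro n hn
    obtain ⟨v, hv, rfl⟩ := Finset.mem_image.mp hn
    obtain ⟨q, hq, rfl⟩ := Finset.mem_image.mp hv
    obtain ⟨hq1, hq2, hq12⟩ := Finset.mem_offDiag.mp hq
    have hd0 : (q.1 - q.2).val ≠ 0 := by
      simp only [ne_eq, ZMod.val_eq_zero, sub_eq_zero]; exact hq12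
    have hμ := primroot hd0 (ZMod.val_lt (q.1 - q.2))
    have hpos : 0 < 2^(M - padicValNat 2 (q.1 - q.2).val) := by positivity
    rw [Polynomial.cyclotomic_eq_minpoly hμ hpos]
    exact minpoly.isIntegrallyClosed_dvd (hμ.isIntegral hpos) (haeval _ hq1 _ hq2 hq12)
  have hScard : S.card = (pivots M J).card := by
    apply Finset.card_image_of_injOn
    intro a ha b hb h
    simp only at h
    have := hpivlt a ha
    have := hpivlt b hb
    omega
  have hprod : (∏ n ∈ S, Polynomial.cyclotomic (2^n) ℚ) ∣ p.map (Int.castRingHom ℚ) := by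
    apply Finset.prod_dvd_of_coprime
    · intro a _ b _ hab
      exact Polynomial.cyclotomic.isCoprime_rat
        (fun h => hab (Nat.pow_right_injective (le_refl 2) h))
    · intro n hn
      rw [← Polynomial.map_cyclotomic_int]
      exact Polynomial.map_dvd _ (hcyc n hn)
  have hmonic : (∏ n ∈ S, Polynomial.cyclotomic (2^n) ℤ).Monic :=
    Polynomial.monic_prod_of_monic _ _ (fun n _ => Polynomial.cyclotomic.monic _ ℤ)
  have hZ : (∏ n ∈ S, Polynomial.cyclotomic (2^n) ℤ) ∣ p := by
    rw [Polynomial.IsPrimitive.Int.dvd_iff_map_cast_dvd_map_cast _ _ hmonic.isPrimitive,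
      Polynomial.map_prod]
    simpa [Polynomial.map_cyclotomic_int] using hprod
  have heval2 : (∏ n ∈ S, Polynomial.cyclotomic (2^n) ℤ).eval 1 = 2^S.card := by
    rw [Polynomial.eval_prod,
      Finset.prod_congr rfl (fun n hn => show Polynomial.eval 1 (Polynomial.cyclotomic (2^n) ℤ) = 2 by
        obtain ⟨v, hv, rfl⟩ := Finset.mem_image.mp hn
        have := hpivlt v hv
        obtain ⟨m, hm⟩ : ∃ m, M - v = m + 1 := ⟨M - v - 1, by omega⟩
        rw [hm, Polynomial.eval_one_cyclotomic_prime_pow]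
        norm_num),
      Finset.prod_const]
  have hdvd1 : ((2:ℤ)^S.card) ∣ (I.card : ℤ) := by
    have h := Polynomial.eval_dvd (x := (1:ℤ)) hZ
    rwa [heval, heval2] at h
  have hdvd2 : (2:ℕ)^S.card ∣ I.card := by exact_mod_cast hdvd1
  rwa [hScard, hcard] at hdvd2

/-- If `J ⊆ ℤ/2^M ℤ` is spectral (some square DFT submatrix `F(I,J)` is unitary
up to scaling), then `J` is homogeneous: `|J|` is a power of `2`, say `2^s`, and
the number of pivots of `J` is exactly `s = log₂|J|`. -/
theorem spectral_implies_homogeneous (M : ℕ) (J : Finset (ZMod (2^M)))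
    (hne : J.Nonempty)
    (hspec : ∃ I : Finset (ZMod (2^M)), I.card = J.card ∧
      Fsub M I J * (Fsub M I J)ᴴ = (J.card : ℂ) • 1) :
    ∃ s : ℕ, J.card = 2^s ∧ (pivots M J).card = s := by
  obtain ⟨I, hcard, hFF⟩ := hspec
  refine ⟨(pivots M J).card, ?_, rfl⟩
  exact Nat.le_antisymm (card_le_pow M J)
    (Nat.le_of_dvd (Finset.card_pos.mpr hne) (pow_dvd_card M I J hne hcard hFF))
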